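/- arXiv:2505.12530 — 5 statements merged into one kernel-verified Lean document; each statement's English description precedes it below -/
import Mathlib

section
/- Let X be a real random variable with absolutely continuous distribution, 0 ≤ α < β ≤ 1, and θ ∈ ℝ such that Pr(X > θ) ∈ [α, β]. Then Pr(X > θ | F̄(X) ∈ [α, β)) = (Pr(X > θ) − α)/(β − α), where F̄(t) = Pr(X > t). -/
/-!
Let `ν` be the law of `X` and `F̄ t = ν (t, ∞)`. Without atoms `F̄` is continuous and falls from
`1` to `0`, so every level `v ∈ (0, 1)` is a value `F̄ t`, and then `(t, ∞)` lies between the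
sublevel sets `{F̄ < u}` for `u ≤ v` and `u > v`. Squeezing gives the probability integral
transform `ν {F̄ < u} = u` on `[0, 1]`, hence `ν {F̄ ∈ [α, β)} = β - α`. The joint event lies
between `{F̄ ∈ [α, F̄ θ)}` and `(θ, ∞) \ {F̄ < α}`, both of mass `F̄ θ - α`.
-/

open MeasureTheory Set Filter Topology ProbabilityTheory

noncomputable def ccdf (ν : Measure ℝ) (t : ℝ) : ℝ := ν.real (Ioi t)

section

variable {ν : Measure ℝ}

lemma ProbabilityTheory.continuous_cdf [IsProbabilityMeasure ν] [NullSingletonClass ν] :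
    Continuous (cdf ν) := by
  refine continuous_iff_continuousAt.2 fun x => ?_
  have hleft : Function.leftLim (cdf ν) x = cdf ν x := by
    have h := (cdf ν).measure_singleton x
    rw [measure_cdf, measure_singleton, eq_comm, ENNReal.ofReal_eq_zero, sub_nonpos] at h
    exact le_antisymm ((monotone_cdf ν).leftLim_le le_rfl) h
  rw [(monotone_cdf ν).continuousAt_iff_leftLim_eq_rightLim, hleft, StieltjesFunction.rightLim_eq]

lemma antitone_ccdf [IsFiniteMeasure ν] : Antitone (ccdf ν) := fun _ _ h =>
  measureReal_mono (Ioi_subset_Ioi h)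

lemma measurableSet_ccdf_lt [IsFiniteMeasure ν] (u : ℝ) : MeasurableSet {t | ccdf ν t < u} :=
  antitone_ccdf.measurable measurableSet_Iio

variable [IsProbabilityMeasure ν]

lemma ccdf_eq_one_sub_cdf : ccdf ν = fun t => 1 - cdf ν t := by
  ext t
  rw [ccdf, cdf_eq_real, ← compl_Iic, measureReal_compl measurableSet_Iic, probReal_univ]

lemma tendsto_ccdf_atTop : Tendsto (ccdf ν) atTop (𝓝 0) := by
  simpa [ccdf_eq_one_sub_cdf] using (tendsto_cdf_atTop ν).const_sub 1

lemma tendsto_ccdf_atBot : Tendsto (ccdf ν) atBot (𝓝 1) := by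
  simpa [ccdf_eq_one_sub_cdf] using (tendsto_cdf_atBot ν).const_sub 1

lemma continuous_ccdf [NullSingletonClass ν] : Continuous (ccdf ν) := by
  rw [ccdf_eq_one_sub_cdf]
  exact continuous_const.sub continuous_cdf

lemma Ioo_subset_range_ccdf [NullSingletonClass ν] : Ioo 0 1 ⊆ range (ccdf ν) := fun _ hu =>
  mem_range_of_exists_le_of_exists_ge continuous_ccdf
    ((tendsto_ccdf_atTop.eventually (gt_mem_nhds hu.1)).exists.imp fun _ => le_of_lt)
    ((tendsto_ccdf_atBot.eventually (lt_mem_nhds hu.2)).exists.imp fun _ => le_of_lt)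

lemma measureReal_ccdf_lt [NullSingletonClass ν] {u : ℝ} (hu : u ∈ Icc 0 1) :
    ν.real {t | ccdf ν t < u} = u := by
  refine le_antisymm (le_of_forall_gt_imp_ge_of_dense fun v huv => ?_)
    (le_of_forall_lt_imp_le_of_dense fun v hvu => ?_)
  · rcases le_or_gt 1 v with hv | hv
    · exact measureReal_le_one.trans hv
    obtain ⟨t, rfl⟩ := Ioo_subset_range_ccdf (ν := ν) ⟨hu.1.trans_lt huv, hv⟩
    exact measureReal_mono fun s hs => antitone_ccdf.reflect_lt (hs.trans huv)
  · rcases le_or_gt v 0 with hv | hv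
    · exact hv.trans measureReal_nonneg
    obtain ⟨t, rfl⟩ := Ioo_subset_range_ccdf (ν := ν) ⟨hv, hvu.trans_le hu.2⟩
    exact measureReal_mono fun s (hs : t < s) => (antitone_ccdf hs.le).trans_lt hvu

lemma measureReal_ccdf_mem_Ico [NullSingletonClass ν] {u v : ℝ} (hu : 0 ≤ u) (huv : u ≤ v)
    (hv : v ≤ 1) : ν.real {t | ccdf ν t ∈ Ico u v} = v - u := by
  have hsub : {t | ccdf ν t < u} ⊆ {t | ccdf ν t < v} := fun t ht => ht.trans_le huv
  have hdiff : {t | ccdf ν t ∈ Ico u v} = {t | ccdf ν t < v} \ {t | ccdf ν t < u} := by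
    ext t; simp [and_comm]
  rw [hdiff, measureReal_sdiff hsub (measurableSet_ccdf_lt u),
    measureReal_ccdf_lt ⟨hu.trans huv, hv⟩, measureReal_ccdf_lt ⟨hu, huv.trans hv⟩]

lemma measureReal_lt_and_ccdf_mem_Ico [NullSingletonClass ν] {α β θ : ℝ} (hα : 0 ≤ α)
    (hθ : ccdf ν θ ∈ Icc α β) :
    ν.real {t | θ < t ∧ ccdf ν t ∈ Ico α β} = ccdf ν θ - α := by
  have hlow : {t | ccdf ν t < α} ⊆ Ioi θ := fun t ht =>
    antitone_ccdf.reflect_lt (ht.trans_le hθ.1)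
  refine le_antisymm ?_ ?_
  · calc ν.real {t | θ < t ∧ ccdf ν t ∈ Ico α β}
        ≤ ν.real (Ioi θ \ {t | ccdf ν t < α}) :=
          measureReal_mono fun t ht => ⟨ht.1, not_lt.2 ht.2.1⟩
      _ = ccdf ν θ - α := by
          rw [measureReal_sdiff hlow (measurableSet_ccdf_lt α), measureReal_ccdf_lt
            ⟨hα, hθ.1.trans measureReal_le_one⟩, ccdf]
  · calc ccdf ν θ - α = ν.real {t | ccdf ν t ∈ Ico α (ccdf ν θ)} :=
          (measureReal_ccdf_mem_Ico hα hθ.1 measureReal_le_one).symm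
      _ ≤ ν.real {t | θ < t ∧ ccdf ν t ∈ Ico α β} :=
          measureReal_mono fun t ht => ⟨antitone_ccdf.reflect_lt ht.2, ht.1, ht.2.trans_le hθ.2⟩

end

/-- If `X` has an absolutely continuous distribution, `0 ≤ α < β ≤ 1`,
and `Pr(X > θ) ∈ [α, β]`, then `Pr(X > θ | F̄(X) ∈ [α, β)) = (Pr(X > θ) − α)/(β − α)`,
where `F̄(t) = Pr(X > t)` and the conditional probability is the ratio of joint over
marginal probabilities. -/
theorem pdp_ccdf_conditional_identity_interior
    {Ω : Type*} [MeasurableSpace Ω] (μ : Measure Ω) [IsProbabilityMeasure μ]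
    (X : Ω → ℝ) (hX : Measurable X)
    (habs : Measure.map X μ ≪ (volume : Measure ℝ))
    (α β : ℝ) (hα : 0 ≤ α) (hαβ : α < β) (hβ : β ≤ 1)
    (Fbar : ℝ → ℝ) (hF : ∀ t, Fbar t = (μ {ω | t < X ω}).toReal)
    (θ : ℝ) (hθ : Fbar θ ∈ Icc α β) :
    (μ {ω | θ < X ω ∧ Fbar (X ω) ∈ Ico α β}).toReal /
      (μ {ω | Fbar (X ω) ∈ Ico α β}).toReal
      = (Fbar θ - α) / (β - α) := by
  set ν := μ.map X
  have : IsProbabilityMeasure ν := Measure.isProbabilityMeasure_map hX.aemeasurable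
  have : NullSingletonClass ν := ⟨fun _ => habs Real.volume_singleton⟩
  obtain rfl : Fbar = ccdf ν := funext fun t => by
    rw [hF, ccdf, map_measureReal_apply hX measurableSet_Ioi]; rfl
  have hD : MeasurableSet {t | ccdf ν t ∈ Ico α β} := antitone_ccdf.measurable measurableSet_Ico
  have hnum : (μ {ω | θ < X ω ∧ ccdf ν (X ω) ∈ Ico α β}).toReal = ccdf ν θ - α := by
    rw [← measureReal_lt_and_ccdf_mem_Ico hα hθ]
    exact (map_measureReal_apply hX (measurableSet_Ioi.inter hD)).symm
  have hden : (μ {ω | ccdf ν (X ω) ∈ Ico α β}).toReal = β - α := by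
    rw [← measureReal_ccdf_mem_Ico (ν := ν) hα hαβ.le hβ]
    exact (map_measureReal_apply hX hD).symm
  rw [hnum, hden]
end

section
/- Consider the DC-constrained problem min over w ∈ W of f₀(w) = f₀⁺(w) − f₀⁻(w) subject to fᵢ(w) = fᵢ⁺(w) − fᵢ⁻(w) ≤ 0 for i ∈ [m], where all fᵢ± are μ-strongly convex and M-Lipschitz on the closed convex set W. Fix w ∈ W feasible (fᵢ(w) ≤ 0 for all i) and form the convexified subproblem with gᵢ(v) = fᵢ⁺(v) − fᵢ⁻(w) − ⟨sᵢ, v − w⟩ for some sᵢ ∈ ∂fᵢ⁻(w). Let ŵ be the optimal solution of min_{v∈W} g₀(v) s.t. gᵢ(v) ≤ 0, with KKT multipliers λᵢ ≥ 0. Then ‖ŵ − w‖ ≤ 2M/μ. -/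
open scoped RealInnerProductSpace
open Finset

lemma strong_subgrad {n : ℕ} {μ : ℝ} (hμ : 0 < μ) {f : EuclideanSpace ℝ (Fin n) → ℝ}
    (hf : StrongConvexOn Set.univ μ f) {x u : EuclideanSpace ℝ (Fin n)}
    (hu : ∀ v, f x + ⟪u, v - x⟫ ≤ f v) (v : EuclideanSpace ℝ (Fin n)) :
    f x + ⟪u, v - x⟫ + μ / 2 * ‖v - x‖ ^ 2 ≤ f v := by
  have hC0 : 0 ≤ μ / 2 * ‖v - x‖ ^ 2 := by positivity
  have key : ∀ t : ℝ, 0 < t → t ≤ 1 →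
      ⟪u, v - x⟫ + (1 - t) * (μ / 2 * ‖v - x‖ ^ 2) ≤ f v - f x := by
    intro t ht ht1
    have h1 := hf.2 (Set.mem_univ v) (Set.mem_univ x) ht.le (by linarith : (0:ℝ) ≤ 1 - t)
      (by ring)
    have h3 : (t • v + (1 - t) • x) - x = t • (v - x) := by module
    have h2 := hu (t • v + (1 - t) • x)
    rw [h3, real_inner_smul_right] at h2
    simp only [smul_eq_mul] at h1
    have h4 : t * (⟪u, v - x⟫ + (1 - t) * (μ / 2 * ‖v - x‖ ^ 2)) ≤ t * (f v - f x) := by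
      nlinarith [h1, h2]
    exact le_of_mul_le_mul_left h4 ht
  have hmain : ⟪u, v - x⟫ + μ / 2 * ‖v - x‖ ^ 2 ≤ f v - f x := by
    refine le_of_forall_pos_le_add ?_
    intro ε hε
    set C : ℝ := μ / 2 * ‖v - x‖ ^ 2 with hCdef
    have htpos : 0 < min 1 (ε / (C + 1)) := by positivity
    have htle : min 1 (ε / (C + 1)) ≤ 1 := min_le_left _ _
    have hk := key _ htpos htle
    have htC : min 1 (ε / (C + 1)) * C ≤ ε := by
      calc min 1 (ε / (C + 1)) * C ≤ (ε / (C + 1)) * C := by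
            apply mul_le_mul_of_nonneg_right (min_le_right _ _) hC0
        _ ≤ ε := by
            rw [div_mul_eq_mul_div, div_le_iff₀ (by linarith)]
            nlinarith [hε.le, hC0]
    nlinarith [hk, htC]
  linarith


/-- first half of Lemma C.2: in the DC-constrained setting with all
`fᵢ±` μ-strongly convex and M-Lipschitz on the closed convex set `W`, if `w ∈ W` is
feasible and `ŵ` is the optimal solution of the convexified subproblem (with
linearizations `gᵢ(v) = fᵢ⁺(v) − fᵢ⁻(w) − ⟨sᵢ, v − w⟩`, `sᵢ ∈ ∂fᵢ⁻(w)`), satisfying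
the KKT conditions with multipliers `λᵢ ≥ 0`, then `‖ŵ − w‖ ≤ 2M/μ`. -/
theorem idca_subproblem_distance_bound {n m : ℕ} (μ M : ℝ) (hμ : 0 < μ) (hM : 0 < M)
    (W : Set (EuclideanSpace ℝ (Fin n))) (hWc : IsClosed W) (hWconv : Convex ℝ W)
    (f0p f0m : EuclideanSpace ℝ (Fin n) → ℝ)
    (fp fm : Fin m → EuclideanSpace ℝ (Fin n) → ℝ)
    -- strong convexity on ℝⁿ
    (hf0p : StrongConvexOn Set.univ μ f0p) (hf0m : StrongConvexOn Set.univ μ f0m)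
    (hfp : ∀ i, StrongConvexOn Set.univ μ (fp i))
    (hfm : ∀ i, StrongConvexOn Set.univ μ (fm i))
    -- M-Lipschitz continuity on W
    (hf0pL : LipschitzOnWith (Real.toNNReal M) f0p W)
    (hf0mL : LipschitzOnWith (Real.toNNReal M) f0m W)
    (hfpL : ∀ i, LipschitzOnWith (Real.toNNReal M) (fp i) W)
    (hfmL : ∀ i, LipschitzOnWith (Real.toNNReal M) (fm i) W)
    -- current feasible point and subgradients of the concave parts at w
    (w : EuclideanSpace ℝ (Fin n)) (hwW : w ∈ W)
    (hwfeas : ∀ i, fp i w - fm i w ≤ 0)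
    (s0 : EuclideanSpace ℝ (Fin n)) (s : Fin m → EuclideanSpace ℝ (Fin n))
    (hs0 : ∀ v, f0m w + ⟪s0, v - w⟫ ≤ f0m v)
    (hs : ∀ i, ∀ v, fm i w + ⟪s i, v - w⟫ ≤ fm i v)
    -- the convexified constraint/objective functions
    (g0 : EuclideanSpace ℝ (Fin n) → ℝ) (g : Fin m → EuclideanSpace ℝ (Fin n) → ℝ)
    (hg0 : ∀ v, g0 v = f0p v - f0m w - ⟪s0, v - w⟫)
    (hg : ∀ i v, g i v = fp i v - fm i w - ⟪s i, v - w⟫)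
    -- ŵ is the optimal solution of the convexified subproblem
    (what : EuclideanSpace ℝ (Fin n)) (hwhatW : what ∈ W)
    (hwhatfeas : ∀ i, g i what ≤ 0)
    (hwhatopt : ∀ v ∈ W, (∀ i, g i v ≤ 0) → g0 what ≤ g0 v)
    -- KKT conditions at ŵ with multipliers λ
    (lam : Fin m → ℝ) (hlam : ∀ i, 0 ≤ lam i)
    (hcs : ∀ i, lam i * g i what = 0)
    (u0 : EuclideanSpace ℝ (Fin n)) (u : Fin m → EuclideanSpace ℝ (Fin n))
    (hu0 : ∀ v, f0p what + ⟪u0, v - what⟫ ≤ f0p v)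
    (hu : ∀ i, ∀ v, fp i what + ⟪u i, v - what⟫ ≤ fp i v)
    (nW : EuclideanSpace ℝ (Fin n))
    (hnW : ∀ v ∈ W, ⟪nW, v - what⟫ ≤ 0)
    (hstat : u0 - s0 + ∑ i, lam i • (u i - s i) + nW = 0) :
    ‖what - w‖ ≤ 2 * M / μ := by
  -- abbreviation
  set d : ℝ := ‖w - what‖ with hd
  have hd0 : 0 ≤ d := norm_nonneg _
  have hMcoe : ((Real.toNNReal M : NNReal) : ℝ) = M := Real.coe_toNNReal _ hM.le
  -- Lipschitz bounds
  have lip : ∀ F : EuclideanSpace ℝ (Fin n) → ℝ, LipschitzOnWith (Real.toNNReal M) F W →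
      F w - F what ≤ M * d ∧ F what - F w ≤ M * d := by
    intro F hF
    have h := hF.dist_le_mul w hwW what hwhatW
    rw [hMcoe] at h
    simp only [dist_eq_norm, Real.norm_eq_abs] at h
    have h2 := abs_le.mp h
    exact ⟨by linarith [h2.2], by linarith [h2.1]⟩
  have lip0p := lip f0p hf0pL
  have lip0m := lip f0m hf0mL
  -- strong subgradient inequalities for the objective parts
  have hA := strong_subgrad hμ hf0p hu0 w
  have hB := strong_subgrad hμ hf0m hs0 what
  -- norms agree
  have hnorm : ‖what - w‖ = d := by rw [hd, norm_sub_rev]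
  -- bound on the objective inner product
  have hobj : ⟪u0 - s0, w - what⟫ ≤ 2 * M * d - μ * d ^ 2 := by
    have e1 : ⟪u0 - s0, w - what⟫ = ⟪u0, w - what⟫ + ⟪s0, what - w⟫ := by
      rw [inner_sub_left]
      have : (what - w : EuclideanSpace ℝ (Fin n)) = -(w - what) := by abel
      rw [this, inner_neg_right]; ring
    rw [e1]
    rw [hnorm] at hB
    nlinarith [hA, hB, lip0p.1, lip0m.2]
  -- bound on each constraint inner product
  have hcon : ∀ i, lam i * ⟪u i - s i, w - what⟫ ≤ 0 := by
    intro i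
    have hgi : ⟪u i - s i, w - what⟫ ≤ g i w - g i what := by
      have h2 := hu i w
      have e1 : ⟪u i - s i, w - what⟫ = ⟪u i, w - what⟫ + ⟪s i, what - w⟫ := by
        rw [inner_sub_left]
        have : (what - w : EuclideanSpace ℝ (Fin n)) = -(w - what) := by abel
        rw [this, inner_neg_right]; ring
      rw [e1, hg i w, hg i what]
      simp only [sub_self, inner_zero_right]
      linarith
    have hgw : g i w ≤ 0 := by
      rw [hg i w]; simp only [sub_self, inner_zero_right]
      linarith [hwfeas i]
    have : lam i * ⟪u i - s i, w - what⟫ ≤ lam i * (g i w - g i what) :=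
      mul_le_mul_of_nonneg_left hgi (hlam i)
    have hcsi := hcs i
    nlinarith [mul_nonpos_of_nonneg_of_nonpos (hlam i) hgw]
  -- stationarity inner product
  have hstat' : ⟪u0 - s0, w - what⟫ + (∑ i, lam i * ⟪u i - s i, w - what⟫)
      + ⟪nW, w - what⟫ = 0 := by
    have h0 := congrArg (fun z : EuclideanSpace ℝ (Fin n) => ⟪z, w - what⟫) hstat
    simp only [inner_add_left, sum_inner, real_inner_smul_left, inner_zero_left] at h0
    exact h0
  have hsum : (∑ i, lam i * ⟪u i - s i, w - what⟫) ≤ 0 :=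
    Finset.sum_nonpos fun i _ => hcon i
  have hnw : ⟪nW, w - what⟫ ≤ 0 := hnW w hwW
  have hfinal : μ * d ^ 2 ≤ 2 * M * d := by nlinarith [hstat', hobj, hsum, hnw]
  rw [hnorm, le_div_iff₀ hμ]
  rcases eq_or_lt_of_le hd0 with h | h
  · nlinarith
  · nlinarith [mul_pos h h]
end

section
/- Let g: ℝⁿ → ℝ be μ-strongly convex with subgradients bounded by M on a closed convex set W, let ŵ minimize a target over W, and suppose at a point v ∈ W with subgradient s ∈ ∂g(v), ‖s‖ ≤ M, the update v⁺ = Proj_W(v − (ε/‖s‖²) s) is performed and g(v) − g(ŵ) > ε. Then ‖v⁺ − ŵ‖² ≤ (1 − εμ/M²)‖v − ŵ‖² − ε²/M². -/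
/-!
The step `z = v - (ε/‖s‖²) s` is a Polyak step. Projecting onto the convex set `W` does not
move `z` away from `ŵ ∈ W`, so it suffices to bound `‖z - ŵ‖²`. Expanding the square, the
cross term `⟪s, v - ŵ⟫` is bounded below by `ε + (μ/2)‖v - ŵ‖²`, using the strong-convexity
inequality at `ŵ` and the gap `g(v) - g(ŵ) > ε`; this gives the contraction with `‖s‖²` in
place of `M²`, which only weakens it.
-/

open scoped RealInnerProductSpace

variable {E : Type*} [NormedAddCommGroup E] [InnerProductSpace ℝ E]

theorem real_inner_sub_nonpos_of_forall_norm_sub_le {K : Set E} (hK : Convex ℝ K)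
    {z p w : E} (hp : p ∈ K) (hw : w ∈ K) (hproj : ∀ u ∈ K, ‖p - z‖ ≤ ‖u - z‖) :
    ⟪z - p, w - p⟫ ≤ 0 := by
  have : Nonempty K := ⟨⟨p, hp⟩⟩
  refine (norm_eq_iInf_iff_real_inner_le_zero hK hp).1 (le_antisymm ?_ ?_) w hw
  · refine le_ciInf fun u => ?_
    simpa only [norm_sub_rev z] using hproj u u.2
  · exact ciInf_le ⟨0, by rintro _ ⟨u, rfl⟩; positivity⟩ (⟨p, hp⟩ : K)

theorem norm_sub_sq_le_of_forall_norm_sub_le {K : Set E} (hK : Convex ℝ K)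
    {z p w : E} (hp : p ∈ K) (hw : w ∈ K) (hproj : ∀ u ∈ K, ‖p - z‖ ≤ ‖u - z‖) :
    ‖p - w‖ ^ 2 ≤ ‖z - w‖ ^ 2 := by
  have hvar := real_inner_sub_nonpos_of_forall_norm_sub_le hK hp hw hproj
  have hsplit : ‖z - w‖ ^ 2 = ‖z - p‖ ^ 2 - 2 * ⟪z - p, w - p⟫ + ‖p - w‖ ^ 2 := by
    rw [show z - w = (z - p) + (p - w) by abel, norm_add_sq_real,
      show p - w = -(w - p) by abel, inner_neg_right, norm_neg]
    ring
  linarith [sq_nonneg ‖z - p‖]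

theorem norm_sub_smul_sub_sq (v w s : E) (η : ℝ) :
    ‖v - η • s - w‖ ^ 2 = ‖v - w‖ ^ 2 - 2 * η * ⟪s, v - w⟫ + η ^ 2 * ‖s‖ ^ 2 := by
  rw [show v - η • s - w = (v - w) - η • s by abel, norm_sub_sq_real, real_inner_smul_right,
    real_inner_comm, norm_smul, Real.norm_eq_abs, mul_pow, sq_abs]
  ring

theorem add_lt_real_inner_of_strongConvex_subgradient {g : E → ℝ} {μ ε : ℝ} {v w s : E}
    (hsub : g v + ⟪s, w - v⟫ + μ / 2 * ‖w - v‖ ^ 2 ≤ g w) (hgap : ε < g v - g w) :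
    ε + μ / 2 * ‖v - w‖ ^ 2 < ⟪s, v - w⟫ := by
  rw [show w - v = -(v - w) by abel, inner_neg_right, norm_neg] at hsub
  linarith

theorem norm_polyak_step_sub_sq_le {v w s : E} {μ ε : ℝ} (hs : 0 < ‖s‖) (hε : 0 ≤ ε)
    (hinner : ε + μ / 2 * ‖v - w‖ ^ 2 ≤ ⟪s, v - w⟫) :
    ‖v - (ε / ‖s‖ ^ 2) • s - w‖ ^ 2 ≤
      (1 - ε * μ / ‖s‖ ^ 2) * ‖v - w‖ ^ 2 - ε ^ 2 / ‖s‖ ^ 2 := by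
  set η := ε / ‖s‖ ^ 2
  have hη : 0 ≤ η := by positivity
  have hstep : η ^ 2 * ‖s‖ ^ 2 = η * ε := by
    simp only [η]
    field_simp
  calc ‖v - η • s - w‖ ^ 2 = ‖v - w‖ ^ 2 - 2 * η * ⟪s, v - w⟫ + η ^ 2 * ‖s‖ ^ 2 :=
        norm_sub_smul_sub_sq v w s η
    _ ≤ ‖v - w‖ ^ 2 - 2 * η * (ε + μ / 2 * ‖v - w‖ ^ 2) + η * ε := by
        rw [hstep]; gcongr
    _ = (1 - ε * μ / ‖s‖ ^ 2) * ‖v - w‖ ^ 2 - ε ^ 2 / ‖s‖ ^ 2 := by ring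

theorem ssg_contraction_step_general {n : ℕ} (μ M ε : ℝ) (hμ : 0 < μ)
    (hε : 0 < ε)
    (W : Set (EuclideanSpace ℝ (Fin n))) (hWconv : Convex ℝ W)
    (g : EuclideanSpace ℝ (Fin n) → ℝ)
    (what : EuclideanSpace ℝ (Fin n)) (hwhatW : what ∈ W)
    (v : EuclideanSpace ℝ (Fin n))
    (s : EuclideanSpace ℝ (Fin n)) (hsM : ‖s‖ ≤ M)
    (hsub : ∀ u ∈ W, g v + ⟪s, u - v⟫ + μ / 2 * ‖u - v‖ ^ 2 ≤ g u)
    (hgap : g v - g what > ε)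
    (vplus : EuclideanSpace ℝ (Fin n)) (hvplusW : vplus ∈ W)
    -- `vplus` is the Euclidean projection of `v − (ε/‖s‖²) s` onto `W`
    (hproj : ∀ u ∈ W, ‖vplus - (v - (ε / ‖s‖ ^ 2) • s)‖ ≤ ‖u - (v - (ε / ‖s‖ ^ 2) • s)‖) :
    ‖vplus - what‖ ^ 2 ≤ (1 - ε * μ / M ^ 2) * ‖v - what‖ ^ 2 - ε ^ 2 / M ^ 2 := by
  have hinner := add_lt_real_inner_of_strongConvex_subgradient (hsub what hwhatW) hgap
  have hs : 0 < ‖s‖ := by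
    refine norm_pos_iff.2 fun hs0 => ?_
    rw [hs0, inner_zero_left] at hinner
    linarith [show 0 ≤ μ / 2 * ‖v - what‖ ^ 2 by positivity]
  calc ‖vplus - what‖ ^ 2 ≤ ‖v - (ε / ‖s‖ ^ 2) • s - what‖ ^ 2 :=
        norm_sub_sq_le_of_forall_norm_sub_le hWconv hvplusW hwhatW hproj
    _ ≤ (1 - ε * μ / ‖s‖ ^ 2) * ‖v - what‖ ^ 2 - ε ^ 2 / ‖s‖ ^ 2 :=
        norm_polyak_step_sub_sq_le hs hε.le hinner.le
    _ ≤ (1 - ε * μ / M ^ 2) * ‖v - what‖ ^ 2 - ε ^ 2 / M ^ 2 := by gcongr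

/-- per-iteration contraction of the switching subgradient method:
if `g` is μ-strongly convex with subgradients bounded by `M` on the closed convex set
`W`, `ŵ` minimizes `g` over `W`, `v ∈ W` has a subgradient `s` with `‖s‖ ≤ M`
(strong convexity giving `g(u) ≥ g(v) + ⟨s, u−v⟩ + (μ/2)‖u−v‖²`), the update
`v⁺ = Proj_W(v − (ε/‖s‖²) s)` is performed, and `g(v) − g(ŵ) > ε`, then
`‖v⁺ − ŵ‖² ≤ (1 − εμ/M²)‖v − ŵ‖² − ε²/M²`. -/
theorem ssg_contraction_step {n : ℕ} (μ M ε : ℝ) (hμ : 0 < μ) (hM : 0 < M)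
    (hε : 0 < ε)
    (W : Set (EuclideanSpace ℝ (Fin n))) (hWc : IsClosed W) (hWconv : Convex ℝ W)
    (g : EuclideanSpace ℝ (Fin n) → ℝ) (hg : StrongConvexOn W μ g)
    (what : EuclideanSpace ℝ (Fin n)) (hwhatW : what ∈ W)
    (hmin : ∀ u ∈ W, g what ≤ g u)
    (v : EuclideanSpace ℝ (Fin n)) (hvW : v ∈ W)
    (s : EuclideanSpace ℝ (Fin n)) (hs0 : s ≠ 0) (hsM : ‖s‖ ≤ M)
    (hsub : ∀ u ∈ W, g v + ⟪s, u - v⟫ + μ / 2 * ‖u - v‖ ^ 2 ≤ g u)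
    (hgap : g v - g what > ε)
    (vplus : EuclideanSpace ℝ (Fin n)) (hvplusW : vplus ∈ W)
    -- `vplus` is the Euclidean projection of `v − (ε/‖s‖²) s` onto `W`
    (hproj : ∀ u ∈ W, ‖vplus - (v - (ε / ‖s‖ ^ 2) • s)‖ ≤ ‖u - (v - (ε / ‖s‖ ^ 2) • s)‖) :
    ‖vplus - what‖ ^ 2 ≤ (1 - ε * μ / M ^ 2) * ‖v - what‖ ^ 2 - ε ^ 2 / M ^ 2 :=
  ssg_contraction_step_general μ M ε hμ hε W hWconv g what hwhatW v s hsM hsub hgap vplus hvplusW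
    hproj
end

section
/- Consider IDCA applied to the DC-constrained problem with all fᵢ± μ-strongly convex and M-Lipschitz on W, uniform Slater margin ν > 0, lower bound f_lb on f₀ over W, and feasible initialization. If each iterate w^{(k+1)} is an ε_k-optimal solution of the convexified subproblem with ε_k = (μ/8)·min{1, 1/(4M²), μν/(8M⁴)}·ε², and w^{(k)} is feasible but not a nearly ε-KKT point, then the next iterate is feasible: fᵢ(w^{(k+1)}) ≤ 0 for all i ∈ [m]. -/
open scoped RealInnerProductSpace
open Finset

/-- `s` is a subgradient of `f` at `x`. -/
def IsSubgradientAt {n : ℕ} (f : EuclideanSpace ℝ (Fin n) → ℝ)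
    (x s : EuclideanSpace ℝ (Fin n)) : Prop :=
  ∀ v, f x + ⟪s, v - x⟫ ≤ f v

/-- `z` belongs to the normal cone of `W` at `x`. -/
def InNormalCone {n : ℕ} (W : Set (EuclideanSpace ℝ (Fin n)))
    (x z : EuclideanSpace ℝ (Fin n)) : Prop :=
  ∀ v ∈ W, ⟪z, v - x⟫ ≤ 0

/-- `w` is a nearly ε-KKT point of the DC-constrained problem
`min f₀⁺ − f₀⁻ s.t. fᵢ⁺ − fᵢ⁻ ≤ 0 over W` (Definition 6.2 of the paper):
there are `ŵ ∈ W` with `‖ŵ − w‖ ≤ ε`, subgradients of the `fᵢ⁺` at `ŵ` and of the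
`fᵢ⁻` at `w`, a normal cone element at `ŵ`, and multipliers `λᵢ ≥ 0` realizing
ε-stationarity, ε-feasibility and ε-complementary slackness. -/
def NearlyKKT {n m : ℕ} (W : Set (EuclideanSpace ℝ (Fin n)))
    (f0p f0m : EuclideanSpace ℝ (Fin n) → ℝ)
    (fp fm : Fin m → EuclideanSpace ℝ (Fin n) → ℝ)
    (ε : ℝ) (w : EuclideanSpace ℝ (Fin n)) : Prop :=
  w ∈ W ∧
  ∃ what ∈ W, ‖what - w‖ ≤ ε ∧
    ∃ (u0 : EuclideanSpace ℝ (Fin n)) (u : Fin m → EuclideanSpace ℝ (Fin n))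
      (s0 : EuclideanSpace ℝ (Fin n)) (s : Fin m → EuclideanSpace ℝ (Fin n))
      (nW : EuclideanSpace ℝ (Fin n)) (lam : Fin m → ℝ),
      IsSubgradientAt f0p what u0 ∧ (∀ i, IsSubgradientAt (fp i) what (u i)) ∧
      IsSubgradientAt f0m w s0 ∧ (∀ i, IsSubgradientAt (fm i) w (s i)) ∧
      InNormalCone W what nW ∧ (∀ i, 0 ≤ lam i) ∧
      ‖u0 - s0 + ∑ i, lam i • (u i - s i) + nW‖ ≤ ε ∧
      (∀ i, fp i w - fm i w ≤ ε) ∧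
      (∀ i, |lam i * (fp i w - fm i w)| ≤ ε)

/-!
If `μ/2 ‖w^{(k+1)} − w^{(k)}‖² ≥ ε_k`, feasibility follows from the majorization
`fᵢ(v) ≤ gᵢ(v) − μ/2 ‖v − w^{(k)}‖²` (strong convexity of `fᵢ⁻`) and `gᵢ(w^{(k+1)}) ≤ ε_k`.
Otherwise `w^{(k)}` is nearly ε-KKT with witness `ŵ^{(k+1)}`, a contradiction. Indeed, Slater's
condition gives Lagrange multipliers for the convex subproblem; its Lagrangian is
`μ(1 + ∑ λᵢ)`-strongly convex, so `ε_k`-optimality puts `w^{(k+1)}` within `√(2ε_k/μ)` of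
`ŵ^{(k+1)}`, hence `ŵ^{(k+1)}` is close to `w^{(k)}`; the subdifferential sum rule turns the
minimality of the Lagrangian into exact stationarity, and complementary slackness at `w^{(k)}` is
bounded by the objective gap `g₀(w^{(k)}) − g₀(ŵ^{(k+1)}) ≤ 2M‖ŵ^{(k+1)} − w^{(k)}‖`.
Both the multipliers and the sum rule come from Hahn–Banach separation.
-/

open Set Filter Topology

lemma convexOn_sum {𝕜 F ι : Type*} [Field 𝕜] [LinearOrder 𝕜] [IsStrictOrderedRing 𝕜]
    [AddCommGroup F] [Module 𝕜 F] {s : Set F} (hs : Convex 𝕜 s) (t : Finset ι)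
    {f : ι → F → 𝕜} (hf : ∀ i ∈ t, ConvexOn 𝕜 s (f i)) :
    ConvexOn 𝕜 s fun x => ∑ i ∈ t, f i x := by
  have := Finset.sum_induction f (ConvexOn 𝕜 s) (fun _ _ ha hb => ha.add hb)
    (convexOn_const 0 hs) hf
  rwa [Finset.sum_fn] at this

section StrongConvexity

variable {E : Type*} [NormedAddCommGroup E] [NormedSpace ℝ E] {s t : Set E} {m : ℝ}
  {f : E → ℝ}

lemma StrongConvexOn.convexOn (hf : StrongConvexOn s m f) (hm : 0 ≤ m) : ConvexOn ℝ s f :=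
  UniformConvexOn.convexOn hf fun r => by positivity

lemma StrongConvexOn.subset (hf : StrongConvexOn t m f) (hst : s ⊆ t) (hs : Convex ℝ s) :
    StrongConvexOn s m f :=
  ⟨hs, fun _ hx _ hy => hf.2 (hst hx) (hst hy)⟩

lemma StrongConvexOn.sub_concaveOn {g : E → ℝ} (hf : StrongConvexOn s m f)
    (hg : ConcaveOn ℝ s g) : StrongConvexOn s m (f - g) := by
  have := UniformConvexOn.sub hf (uniformConcaveOn_zero.2 hg)
  rwa [add_zero] at this

lemma StrongConvexOn.add_sq_le_of_isMinOn {x v : E} (hf : StrongConvexOn s m f)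
    (hmin : IsMinOn f s x) (hx : x ∈ s) (hv : v ∈ s) :
    f x + m / 2 * ‖v - x‖ ^ 2 ≤ f v := by
  have key : ∀ t ∈ Ioo (0 : ℝ) 1, (1 - t) * (m / 2 * ‖v - x‖ ^ 2) ≤ f v - f x := by
    rintro t ⟨ht0, ht1⟩
    have hcomb := hf.2 hx hv (sub_nonneg.2 ht1.le) ht0.le (sub_add_cancel 1 t)
    have hle := isMinOn_iff.1 hmin _ (hf.1 hx hv (sub_nonneg.2 ht1.le) ht0.le (sub_add_cancel 1 t))
    rw [norm_sub_rev, smul_eq_mul, smul_eq_mul] at hcomb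
    refine le_of_mul_le_mul_left ?_ ht0
    nlinarith
  have hlim : Tendsto (fun t : ℝ => (1 - t) * (m / 2 * ‖v - x‖ ^ 2)) (𝓝[>] 0)
      (𝓝 (m / 2 * ‖v - x‖ ^ 2)) := by
    have : Continuous fun t : ℝ => (1 - t) * (m / 2 * ‖v - x‖ ^ 2) := by fun_prop
    simpa using (this.tendsto 0).mono_left nhdsWithin_le_nhds
  have := le_of_tendsto hlim (Filter.mem_of_superset (Ioo_mem_nhdsGT one_pos) key)
  linarith

end StrongConvexity

section StrongConvexityInner

variable {E : Type*} [NormedAddCommGroup E] [InnerProductSpace ℝ E] {s : Set E} {m : ℝ}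

lemma StrongConvexOn.add_sum_mul {ι : Type*} [Fintype ι] {f₀ : E → ℝ} {f : ι → E → ℝ}
    {c : ι → ℝ} (h₀ : StrongConvexOn s m f₀) (h : ∀ i, StrongConvexOn s m (f i))
    (hc : ∀ i, 0 ≤ c i) :
    StrongConvexOn s (m * (1 + ∑ i, c i)) fun v => f₀ v + ∑ i, c i * f i v := by
  simp_rw [strongConvexOn_iff_convex] at *
  have hsum := convexOn_sum h₀.1 Finset.univ fun i _ => (h i).smul (hc i)
  refine (h₀.add hsum).congr fun v _ => ?_
  simp only [Pi.add_apply, smul_eq_mul, mul_sub, Finset.sum_sub_distrib, ← Finset.sum_mul]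
  ring

lemma sq_norm_sub_le_of_isMinOn_lagrangian {ι : Type*} [Fintype ι] {W : Set E} {μ δ : ℝ}
    {g₀ : E → ℝ} {g : ι → E → ℝ} {lam : ι → ℝ} {x y : E} (hg₀ : StrongConvexOn W μ g₀)
    (hg : ∀ i, StrongConvexOn W μ (g i))
    (hlam : ∀ i, 0 ≤ lam i) (hcs : ∀ i, lam i * g i x = 0)
    (hmin : IsMinOn (fun v => g₀ v + ∑ i, lam i * g i v) W x) (hx : x ∈ W) (hy : y ∈ W)
    (hgap : g₀ y - g₀ x ≤ δ) (hfeas : ∀ i, g i y ≤ δ) :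
    μ / 2 * ‖y - x‖ ^ 2 ≤ δ := by
  have hgrowth := (hg₀.add_sum_mul hg hlam).add_sq_le_of_isMinOn hmin hx hy
  simp only [hcs, Finset.sum_const_zero, add_zero] at hgrowth
  have hS : 0 ≤ ∑ i, lam i := Finset.sum_nonneg fun i _ => hlam i
  have hsum : ∑ i, lam i * g i y ≤ (∑ i, lam i) * δ := by
    rw [Finset.sum_mul]
    exact Finset.sum_le_sum fun i _ => mul_le_mul_of_nonneg_left (hfeas i) (hlam i)
  refine le_of_mul_le_mul_left ?_ (by linarith : 0 < 1 + ∑ i, lam i)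
  nlinarith

end StrongConvexityInner

section Alternative

variable {ι : Type*} [Fintype ι]

lemma exists_nonneg_ne_zero_forall_sum_mul_pos {A : Set (ι → ℝ)} (hAo : IsOpen A)
    (hAc : Convex ℝ A) (hAu : IsUpperSet A) (hA : A.Nonempty) (h0 : (0 : ι → ℝ) ∉ A) :
    ∃ y : ι → ℝ, 0 ≤ y ∧ y ≠ 0 ∧ ∀ z ∈ A, 0 < ∑ j, y j * z j := by
  classical
  obtain ⟨f, hf⟩ := geometric_hahn_banach_open_point hAc hAo h0
  rw [map_zero] at hf
  set e : ι → ι → ℝ := fun i j => if i = j then 1 else 0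
  have hf_apply : ∀ z, f z = ∑ i, z i * f (e i) := f.toLinearMap.pi_apply_eq_sum_univ
  obtain ⟨z₀, hz₀⟩ := hA
  -- `A` is upward closed, so `f < 0` on `A` forces `f ≤ 0` on the basis vectors.
  have hfe : ∀ i, f (e i) ≤ 0 := fun i => by
    by_contra! hpos
    have hT : 0 ≤ -f z₀ / f (e i) := div_nonneg (neg_nonneg.2 (hf z₀ hz₀).le) hpos.le
    have hle : z₀ ≤ z₀ + (-f z₀ / f (e i)) • e i :=
      le_add_of_nonneg_right (smul_nonneg hT fun j => by simp only [e]; split_ifs <;> norm_num)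
    have := hf _ (hAu hle hz₀)
    rw [map_add, map_smul, smul_eq_mul, div_mul_cancel₀ _ hpos.ne'] at this
    linarith
  refine ⟨fun i => -f (e i), fun i => neg_nonneg.2 (hfe i), fun hy => ?_, fun z hz => ?_⟩
  · have := hf z₀ hz₀
    rw [hf_apply] at this
    simp only [funext_iff, Pi.zero_apply, neg_eq_zero] at hy
    simp [hy] at this
  · have := hf z hz
    rw [hf_apply] at this
    simpa only [mul_neg, Finset.sum_neg_distrib, neg_pos, mul_comm] using this

variable {E : Type*} [AddCommGroup E] [Module ℝ E] {W : Set E}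

lemma exists_nonneg_ne_zero_forall_sum_mul_nonneg {h : ι → E → ℝ}
    (hh : ∀ j, ConvexOn ℝ W (h j)) (hW : W.Nonempty) (hinc : ∀ v ∈ W, ∃ j, 0 ≤ h j v) :
    ∃ y : ι → ℝ, 0 ≤ y ∧ y ≠ 0 ∧ ∀ v ∈ W, 0 ≤ ∑ j, y j * h j v := by
  obtain ⟨v₀, hv₀⟩ := hW
  have hWc : Convex ℝ W := (hh (hinc v₀ hv₀).choose).1
  set A : Set (ι → ℝ) := ⋃ v ∈ W, univ.pi fun j => Ioi (h j v)
  have hA : ∀ z, z ∈ A ↔ ∃ v ∈ W, ∀ j, h j v < z j := by simp [A]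
  have hAo : IsOpen A :=
    isOpen_biUnion fun v _ => isOpen_set_pi finite_univ fun _ _ => isOpen_Ioi
  have hAc : Convex ℝ A := by
    intro z hz z' hz' a b ha hb hab
    obtain ⟨v, hv, hvz⟩ := (hA z).1 hz
    obtain ⟨v', hv', hvz'⟩ := (hA z').1 hz'
    refine (hA _).2 ⟨a • v + b • v', hWc hv hv' ha hb hab, fun j => ?_⟩
    calc h j (a • v + b • v') ≤ a * h j v + b * h j v' := (hh j).2 hv hv' ha hb hab
      _ < a * z j + b * z' j := by
        rcases ha.eq_or_lt with rfl | ha'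
        · rw [zero_add] at hab
          simpa [hab] using hvz' j
        · exact add_lt_add_of_lt_of_le (mul_lt_mul_of_pos_left (hvz j) ha')
            (mul_le_mul_of_nonneg_left (hvz' j).le hb)
  have hAu : IsUpperSet A := fun z z' hzz' hz => by
    obtain ⟨v, hv, hvz⟩ := (hA z).1 hz
    exact (hA z').2 ⟨v, hv, fun j => (hvz j).trans_le (hzz' j)⟩
  have h0 : (0 : ι → ℝ) ∉ A := fun h0 => by
    obtain ⟨v, hv, hvz⟩ := (hA 0).1 h0
    obtain ⟨j, hj⟩ := hinc v hv
    exact (hvz j).not_ge hj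
  obtain ⟨y, hy0, hyne, hy⟩ := exists_nonneg_ne_zero_forall_sum_mul_pos hAo hAc hAu
    ⟨_, (hA _).2 ⟨v₀, hv₀, fun j => lt_add_one (h j v₀)⟩⟩ h0
  refine ⟨y, hy0, hyne, fun v hv => ?_⟩
  have hlim : Tendsto (fun δ : ℝ => ∑ j, y j * (h j v + δ)) (𝓝[>] 0) (𝓝 (∑ j, y j * h j v)) := by
    have : Continuous fun δ : ℝ => ∑ j, y j * (h j v + δ) := by fun_prop
    simpa using (this.tendsto 0).mono_left nhdsWithin_le_nhds
  exact ge_of_tendsto hlim <| eventually_nhdsWithin_of_forall fun δ hδ =>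
    (hy _ <| (hA _).2 ⟨v, hv, fun j => lt_add_of_pos_right _ hδ⟩).le

lemma exists_nonneg_forall_le_add_sum_mul {g₀ : E → ℝ} {g : ι → E → ℝ} {x : E}
    (hg₀ : ConvexOn ℝ W g₀) (hg : ∀ i, ConvexOn ℝ W (g i)) (hx : x ∈ W)
    (hopt : ∀ v ∈ W, (∀ i, g i v ≤ 0) → g₀ x ≤ g₀ v) (hslater : ∃ v ∈ W, ∀ i, g i v < 0) :
    ∃ lam : ι → ℝ, (∀ i, 0 ≤ lam i) ∧ ∀ v ∈ W, g₀ x ≤ g₀ v + ∑ i, lam i * g i v := by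
  set h : Option ι → E → ℝ := fun j => j.elim (fun v => g₀ v - g₀ x) g
  have hh : ∀ j, ConvexOn ℝ W (h j) := by
    rintro (_ | i)
    exacts [hg₀.sub (concaveOn_const _ hg₀.1), hg i]
  have hinc : ∀ v ∈ W, ∃ j, 0 ≤ h j v := fun v hv => by
    by_cases hfv : ∀ i, g i v ≤ 0
    · exact ⟨none, sub_nonneg.2 (hopt v hv hfv)⟩
    · obtain ⟨i, hi⟩ := not_forall.1 hfv
      exact ⟨some i, (not_le.1 hi).le⟩
  obtain ⟨y, hy0, hyne, hy⟩ := exists_nonneg_ne_zero_forall_sum_mul_nonneg hh ⟨x, hx⟩ hinc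
  simp only [Fintype.sum_option, h, Option.elim] at hy
  obtain ⟨vs, hvs, hvsneg⟩ := hslater
  -- At a Slater point the constraint terms are negative unless their weights vanish.
  have hpos : 0 < y none := by
    refine (show (0 : ℝ) ≤ y none from hy0 none).lt_of_ne fun h0 => hyne ?_
    have hsum := hy vs hvs
    rw [← h0, zero_mul, zero_add] at hsum
    have hterm : ∀ i ∈ Finset.univ, y (some i) * g i vs ≤ 0 := fun i _ =>
      mul_nonpos_of_nonneg_of_nonpos (hy0 _) (hvsneg i).le
    have hzero := (Finset.sum_eq_zero_iff_of_nonpos hterm).1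
      (le_antisymm (Finset.sum_nonpos hterm) hsum)
    funext j
    cases j with
    | none => exact h0.symm
    | some i => exact (mul_eq_zero.1 (hzero i (Finset.mem_univ i))).resolve_right (hvsneg i).ne
  refine ⟨fun i => y (some i) / y none, fun i => div_nonneg (hy0 _) hpos.le, fun v hv => ?_⟩
  have := hy v hv
  simp only [div_mul_eq_mul_div, ← Finset.sum_div]
  rw [← sub_le_iff_le_add', le_div_iff₀ hpos]
  linarith

lemma exists_lagrangeMultipliers {g₀ : E → ℝ} {g : ι → E → ℝ} {x : E} (hg₀ : ConvexOn ℝ W g₀)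
    (hg : ∀ i, ConvexOn ℝ W (g i)) (hx : x ∈ W) (hfeas : ∀ i, g i x ≤ 0)
    (hopt : ∀ v ∈ W, (∀ i, g i v ≤ 0) → g₀ x ≤ g₀ v) (hslater : ∃ v ∈ W, ∀ i, g i v < 0) :
    ∃ lam : ι → ℝ, (∀ i, 0 ≤ lam i) ∧ (∀ i, lam i * g i x = 0) ∧
      IsMinOn (fun v => g₀ v + ∑ i, lam i * g i v) W x := by
  obtain ⟨lam, hlam, hL⟩ := exists_nonneg_forall_le_add_sum_mul hg₀ hg hx hopt hslater
  have hterm : ∀ i ∈ Finset.univ, lam i * g i x ≤ 0 := fun i _ =>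
    mul_nonpos_of_nonneg_of_nonpos (hlam i) (hfeas i)
  have hcs : ∀ i, lam i * g i x = 0 := fun i =>
    (Finset.sum_eq_zero_iff_of_nonpos hterm).1
      (le_antisymm (Finset.sum_nonpos hterm) (by linarith [hL x hx])) i (Finset.mem_univ i)
  refine ⟨lam, hlam, hcs, isMinOn_iff.2 fun v hv => ?_⟩
  simpa only [hcs, Finset.sum_const_zero, add_zero] using hL v hv

end Alternative

lemma ConvexOn.exists_subgradient_of_isMinOn {P : Type*} [TopologicalSpace P] [AddCommGroup P]
    [Module ℝ P] [IsTopologicalAddGroup P] [ContinuousSMul ℝ P] {φ : P → ℝ} {C : Set P} {x : P}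
    (hφ : ConvexOn ℝ univ φ) (hφc : Continuous φ) (hC : Convex ℝ C) (hx : x ∈ C)
    (hmin : IsMinOn φ C x) :
    ∃ p : StrongDual ℝ P, (∀ v, φ x + p (v - x) ≤ φ v) ∧ ∀ v ∈ C, 0 ≤ p (v - x) := by
  set A : Set (P × ℝ) := {q | q.1 ∈ univ ∧ φ q.1 < q.2}
  have hAopen : IsOpen A := by
    simp only [A, mem_univ, true_and]
    exact isOpen_lt (hφc.comp continuous_fst) continuous_snd
  have hdisj : Disjoint A (C ×ˢ Iic (φ x)) := Set.disjoint_left.2 fun q hqA hqB =>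
    (hqA.2.trans_le hqB.2).not_ge (isMinOn_iff.1 hmin _ hqB.1)
  obtain ⟨f, u, hfA, hfB⟩ :=
    geometric_hahn_banach_open hφ.convex_strict_epigraph hAopen (hC.prod (convex_Iic _)) hdisj
  set ℓ := f.comp (ContinuousLinearMap.inl ℝ P ℝ)
  set a := f (0, 1)
  have hf : ∀ v t, f (v, t) = ℓ v + t * a := fun v t => by
    rw [show (v, t) = (v, 0) + t • ((0 : P), (1 : ℝ)) by ext <;> simp, map_add, map_smul,
      smul_eq_mul, mul_comm]
    rfl
  have hA : ∀ v t, φ v < t → ℓ v + t * a < u := fun v t h => hf v t ▸ hfA (v, t) ⟨mem_univ v, h⟩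
  have hB : ∀ v ∈ C, u ≤ ℓ v + φ x * a := fun v hv => hf v _ ▸ hfB (v, φ x) ⟨hv, mem_Iic.2 le_rfl⟩
  have ha : a < 0 := by
    have := hA x (φ x + 1) (lt_add_one _)
    have := hB x hx
    linarith
  have hA' : ∀ v, ℓ v + φ v * a ≤ u := fun v => le_of_forall_pos_lt_add fun ε hε => by
    have := hA v (φ v + ε / -a) (lt_add_of_pos_right _ (div_pos hε (neg_pos.2 ha)))
    have e : (φ v + ε / -a) * a = φ v * a - ε := by
      rw [div_neg, ← sub_eq_add_neg, sub_mul, div_mul_cancel₀ ε ha.ne]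
    linarith
  refine ⟨(-a)⁻¹ • ℓ, fun v => ?_, fun v hv => ?_⟩
  · have h1 := hA' v
    have h2 := hB x hx
    rw [smul_apply, smul_eq_mul, map_sub, ← le_sub_iff_add_le',
      inv_mul_le_iff₀ (neg_pos.2 ha)]
    nlinarith
  · have h1 := hA' x
    have h2 := hB v hv
    rw [smul_apply, smul_eq_mul, map_sub]
    exact mul_nonneg (inv_nonneg.2 (neg_nonneg.2 ha.le)) (by linarith)

lemma ConvexOn.continuous_of_univ {E : Type*} [NormedAddCommGroup E] [NormedSpace ℝ E]
    [FiniteDimensional ℝ E] {f : E → ℝ} (hf : ConvexOn ℝ univ f) : Continuous f :=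
  continuousOn_univ.1 (hf.continuousOn isOpen_univ)

section Subgradient

variable {n : ℕ} {f : EuclideanSpace ℝ (Fin n) → ℝ} {x : EuclideanSpace ℝ (Fin n)}

open InnerProductSpace in
lemma isSubgradientAt_toDual_symm {p : StrongDual ℝ (EuclideanSpace ℝ (Fin n))}
    (hp : ∀ v, f x + p (v - x) ≤ f v) : IsSubgradientAt f x ((toDual ℝ _).symm p) :=
  fun v => by
    rw [toDual_symm_apply]
    exact hp v

lemma IsSubgradientAt.add_sq_le {μ : ℝ} {s : EuclideanSpace ℝ (Fin n)}
    (hf : StrongConvexOn univ μ f) (hs : IsSubgradientAt f x s) (v : EuclideanSpace ℝ (Fin n)) :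
    f x + ⟪s, v - x⟫ + μ / 2 * ‖v - x‖ ^ 2 ≤ f v := by
  have hmin : IsMinOn (f - fun v => ⟪s, v⟫) univ x := isMinOn_iff.2 fun v _ => by
    have := hs v
    simp only [Pi.sub_apply, inner_sub_right] at this ⊢
    linarith
  have := (hf.sub_concaveOn ((innerₗ _ s).concaveOn convex_univ)).add_sq_le_of_isMinOn hmin
    (mem_univ x) (mem_univ v)
  simp only [Pi.sub_apply, innerₗ_apply_apply, inner_sub_right] at this ⊢
  linarith

lemma ConvexOn.exists_isSubgradientAt (hf : ConvexOn ℝ univ f) (x : EuclideanSpace ℝ (Fin n)) :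
    ∃ u, IsSubgradientAt f x u := by
  obtain ⟨p, hp, -⟩ := hf.exists_subgradient_of_isMinOn hf.continuous_of_univ
    (convex_singleton x) rfl (isMinOn_iff.2 fun v hv => by rw [mem_singleton_iff.1 hv])
  exact ⟨_, isSubgradientAt_toDual_symm hp⟩

lemma IsSubgradientAt.of_sub_inner {a u : EuclideanSpace ℝ (Fin n)}
    (h : IsSubgradientAt (fun v => f v - ⟪a, v⟫) x u) : IsSubgradientAt f x (u + a) := fun v => by
  have := h v
  simp only [inner_add_left, inner_sub_right] at this ⊢
  linarith

lemma IsSubgradientAt.exists_smul_eq {c : ℝ} {r : EuclideanSpace ℝ (Fin n)}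
    (hf : ConvexOn ℝ univ f) (hc : 0 ≤ c) (h : IsSubgradientAt (fun v => c * f v) x r) :
    ∃ u, IsSubgradientAt f x u ∧ c • u = r := by
  rcases hc.eq_or_lt with rfl | hc
  · have hr : r = 0 := by
      have := h (x + r)
      rw [add_sub_cancel_left, real_inner_self_eq_norm_sq] at this
      simpa using this
    obtain ⟨u, hu⟩ := hf.exists_isSubgradientAt x
    exact ⟨u, hu, by rw [hr, zero_smul]⟩
  · refine ⟨c⁻¹ • r, fun v => ?_, smul_inv_smul₀ hc.ne' r⟩
    have := h v
    rw [real_inner_smul_left, ← mul_le_mul_iff_right₀ hc, mul_add, ← mul_assoc,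
      mul_inv_cancel₀ hc.ne', one_mul]
    exact this

open InnerProductSpace in
lemma exists_isSubgradientAt_inNormalCone_neg_sum {ι : Type*} [Fintype ι]
    {F : ι → EuclideanSpace ℝ (Fin n) → ℝ} {C : Set (EuclideanSpace ℝ (Fin n))}
    (hF : ∀ j, ConvexOn ℝ univ (F j)) (hC : Convex ℝ C) (hx : x ∈ C)
    (hmin : IsMinOn (fun v => ∑ j, F j v) C x) :
    ∃ u : ι → EuclideanSpace ℝ (Fin n),
      (∀ j, IsSubgradientAt (F j) x (u j)) ∧ InNormalCone C x (-∑ j, u j) := by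
  classical
  set φ : (ι → EuclideanSpace ℝ (Fin n)) → ℝ := fun q => ∑ j, F j (q j)
  set diag : EuclideanSpace ℝ (Fin n) →ₗ[ℝ] ι → EuclideanSpace ℝ (Fin n) :=
    LinearMap.pi fun _ => LinearMap.id
  have hφ : ConvexOn ℝ univ φ := convexOn_sum convex_univ _ fun j _ =>
    (hF j).comp_linearMap (LinearMap.proj (R := ℝ) (φ := fun _ : ι => EuclideanSpace ℝ (Fin n)) j)
  have hφc : Continuous φ :=
    continuous_finsetSum _ fun j _ => (hF j).continuous_of_univ.comp (continuous_apply j)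
  have hmin' : IsMinOn φ (diag '' C) (diag x) :=
    isMinOn_iff.2 <| forall_mem_image.2 fun v hv => isMinOn_iff.1 hmin v hv
  obtain ⟨p, hp, hpC⟩ := hφ.exists_subgradient_of_isMinOn hφc (hC.linear_image diag)
    (mem_image_of_mem _ hx) hmin'
  set pj : ι → StrongDual ℝ (EuclideanSpace ℝ (Fin n)) := fun j =>
    p.comp (ContinuousLinearMap.single ℝ (fun _ => EuclideanSpace ℝ (Fin n)) j)
  have hpj : ∀ w, ∑ j, pj j w = p (diag w) := fun w => by
    show ∑ j, p (Pi.single j w) = p (diag w)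
    rw [← map_sum]
    exact congrArg p (Finset.univ_sum_single fun _ => w)
  refine ⟨fun j => (toDual ℝ _).symm (pj j), fun j => isSubgradientAt_toDual_symm fun v => ?_,
    fun v hv => ?_⟩
  · have := hp (diag x + Pi.single j (v - x))
    rw [add_sub_cancel_left] at this
    have hsum : φ (diag x + Pi.single j (v - x)) - φ (diag x) = F j v - F j x := by
      simp only [φ, ← Finset.sum_sub_distrib]
      rw [Fintype.sum_eq_single j fun k hk => by simp [diag, hk]]
      simp [diag]
    have : pj j (v - x) = p (Pi.single j (v - x)) := rfl
    linarith
  · have := hpC (diag v) (mem_image_of_mem _ hv)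
    rw [← map_sub, ← hpj] at this
    simpa [inner_neg_left, sum_inner, toDual_symm_apply] using this

lemma exists_stationary_of_isMinOn {ι : Type*} [Fintype ι] {W : Set (EuclideanSpace ℝ (Fin n))}
    {f₀ : EuclideanSpace ℝ (Fin n) → ℝ} {f : ι → EuclideanSpace ℝ (Fin n) → ℝ}
    {s₀ : EuclideanSpace ℝ (Fin n)} {s : ι → EuclideanSpace ℝ (Fin n)} {lam : ι → ℝ}
    (hW : Convex ℝ W) (hf₀ : ConvexOn ℝ univ f₀) (hf : ∀ i, ConvexOn ℝ univ (f i))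
    (hlam : ∀ i, 0 ≤ lam i) (hx : x ∈ W)
    (hmin : IsMinOn (fun v => f₀ v - ⟪s₀, v⟫ + ∑ i, lam i * (f i v - ⟪s i, v⟫)) W x) :
    ∃ (u₀ : EuclideanSpace ℝ (Fin n)) (u : ι → EuclideanSpace ℝ (Fin n))
      (nW : EuclideanSpace ℝ (Fin n)),
      IsSubgradientAt f₀ x u₀ ∧ (∀ i, IsSubgradientAt (f i) x (u i)) ∧ InNormalCone W x nW ∧
        u₀ - s₀ + ∑ i, lam i • (u i - s i) + nW = 0 := by
  set a := s₀ + ∑ i, lam i • s i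
  set F : Option ι → EuclideanSpace ℝ (Fin n) → ℝ :=
    fun j => j.elim (fun v => f₀ v - ⟪a, v⟫) fun i v => lam i * f i v
  have hF : ∀ j, ConvexOn ℝ univ (F j) := by
    rintro (_ | i)
    exacts [hf₀.sub ((innerₗ _ a).concaveOn convex_univ), (hf i).smul (hlam i)]
  have hsum : ∀ v, ∑ j, F j v = f₀ v - ⟪s₀, v⟫ + ∑ i, lam i * (f i v - ⟪s i, v⟫) := fun v => by
    simp only [Fintype.sum_option, F, Option.elim, a, inner_add_left, sum_inner,
      real_inner_smul_left, mul_sub, Finset.sum_sub_distrib]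
    ring
  obtain ⟨w, hw, hnW⟩ :=
    exists_isSubgradientAt_inNormalCone_neg_sum hF hW hx (by simpa only [hsum] using hmin)
  choose u hu hlu using fun i => (hw (some i)).exists_smul_eq (hf i) (hlam i)
  refine ⟨w none + a, u, _, (hw none).of_sub_inner, hu, hnW, ?_⟩
  simp only [Fintype.sum_option, smul_sub, Finset.sum_sub_distrib, hlu, a]
  abel

end Subgradient

section Convexification

variable {E : Type*} [NormedAddCommGroup E] [InnerProductSpace ℝ E]

-- The paper's `gᵢ`: `p - q` with `q` linearized at `w` along its subgradient `s`.
def convexifiedAt (p q : E → ℝ) (w s : E) (v : E) : ℝ := p v - q w - ⟪s, v - w⟫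

variable {p q : E → ℝ} {w s : E}

lemma convexifiedAt_self : convexifiedAt p q w s w = p w - q w := by
  simp [convexifiedAt]

lemma convexifiedAt_eq_add (v : E) :
    convexifiedAt p q w s v = p v - ⟪s, v⟫ + (⟪s, w⟫ - q w) := by
  rw [convexifiedAt, inner_sub_right]
  ring

lemma StrongConvexOn.convexifiedAt {t : Set E} {μ : ℝ} (hp : StrongConvexOn t μ p) :
    StrongConvexOn t μ (_root_.convexifiedAt p q w s) := by
  have : _root_.convexifiedAt p q w s = p - fun v => ⟪s, v⟫ + (q w - ⟪s, w⟫) := by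
    ext v
    rw [convexifiedAt_eq_add, Pi.sub_apply]
    ring
  rw [this]
  exact hp.sub_concaveOn (((innerₗ E s).concaveOn hp.1).add_const _)

end Convexification

section DCProblem

variable {n : ℕ} {p q : EuclideanSpace ℝ (Fin n) → ℝ} {w s : EuclideanSpace ℝ (Fin n)} {μ : ℝ}

lemma sub_le_convexifiedAt_sub (hq : StrongConvexOn univ μ q) (hs : IsSubgradientAt q w s)
    (v : EuclideanSpace ℝ (Fin n)) :
    p v - q v ≤ convexifiedAt p q w s v - μ / 2 * ‖v - w‖ ^ 2 := by
  have := hs.add_sq_le hq v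
  rw [convexifiedAt]
  linarith

lemma convexifiedAt_self_sub_le {W : Set (EuclideanSpace ℝ (Fin n))} {K : NNReal}
    {v : EuclideanSpace ℝ (Fin n)}
    (hp : LipschitzOnWith K p W) (hq : LipschitzOnWith K q W) (hs : IsSubgradientAt q w s)
    (hw : w ∈ W) (hv : v ∈ W) :
    convexifiedAt p q w s w - convexifiedAt p q w s v ≤ 2 * K * ‖v - w‖ := by
  have hpv := (abs_le.1 (hp.dist_le_mul w hw v hv)).2
  have hqv := (abs_le.1 (hq.dist_le_mul v hv w hw)).2
  have := hs v
  rw [dist_comm w v, dist_eq_norm] at hpv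
  rw [dist_eq_norm] at hqv
  rw [convexifiedAt_self, convexifiedAt]
  linarith

end DCProblem

lemma nearlyKKT_of_isMinOn_lagrangian {n m : ℕ} {W : Set (EuclideanSpace ℝ (Fin n))}
    {f0p f0m : EuclideanSpace ℝ (Fin n) → ℝ} {fp fm : Fin m → EuclideanSpace ℝ (Fin n) → ℝ}
    {w x s0 : EuclideanSpace ℝ (Fin n)} {s : Fin m → EuclideanSpace ℝ (Fin n)} {lam : Fin m → ℝ}
    {ε : ℝ} (hW : Convex ℝ W) (hf0p : ConvexOn ℝ univ f0p) (hfp : ∀ i, ConvexOn ℝ univ (fp i))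
    (hw : w ∈ W) (hfeas : ∀ i, fp i w - fm i w ≤ 0) (hs0 : IsSubgradientAt f0m w s0)
    (hs : ∀ i, IsSubgradientAt (fm i) w (s i)) (hx : x ∈ W) (hlam : ∀ i, 0 ≤ lam i)
    (hcs : ∀ i, lam i * convexifiedAt (fp i) (fm i) w (s i) x = 0)
    (hmin : IsMinOn (fun v => convexifiedAt f0p f0m w s0 v +
      ∑ i, lam i * convexifiedAt (fp i) (fm i) w (s i) v) W x)
    (hdist : ‖x - w‖ ≤ ε) (hgap : convexifiedAt f0p f0m w s0 w - convexifiedAt f0p f0m w s0 x ≤ ε) :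
    NearlyKKT W f0p f0m fp fm ε w := by
  have hε : 0 ≤ ε := (norm_nonneg _).trans hdist
  have hmin' : IsMinOn (fun v => f0p v - ⟪s0, v⟫ + ∑ i, lam i * (fp i v - ⟪s i, v⟫)) W x :=
    isMinOn_iff.2 fun v hv => by
      have := isMinOn_iff.1 hmin v hv
      simp only [convexifiedAt_eq_add, mul_add, Finset.sum_add_distrib] at this
      linarith
  obtain ⟨u0, u, nW, hu0, hu, hnW, hstat⟩ :=
    exists_stationary_of_isMinOn hW hf0p hfp hlam hx hmin'
  refine ⟨hw, x, hx, hdist, u0, u, s0, s, nW, lam, hu0, hu, hs0, hs, hnW, hlam,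
    by rw [hstat, norm_zero]; exact hε, fun i => (hfeas i).trans hε, fun i => ?_⟩
  have hterm : ∀ j, 0 ≤ -(lam j * convexifiedAt (fp j) (fm j) w (s j) w) := fun j => by
    rw [convexifiedAt_self, neg_nonneg]
    exact mul_nonpos_of_nonneg_of_nonpos (hlam j) (hfeas j)
  have hsingle := Finset.single_le_sum (fun j _ => hterm j) (Finset.mem_univ i)
  have hLw := isMinOn_iff.1 hmin w hw
  simp only [hcs, Finset.sum_const_zero, add_zero, Finset.sum_neg_distrib] at hLw hsingle
  rw [← convexifiedAt_self (s := s i), abs_of_nonpos (neg_nonneg.1 (hterm i))]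
  linarith

lemma norm_sub_le_and_two_mul_norm_sub_le {E : Type*} [SeminormedAddCommGroup E] {x y z : E}
    {μ M ε c : ℝ} (hμ : 0 < μ) (hM : 0 < M) (hε : 0 ≤ ε) (hc : c ≤ min 1 (1 / (4 * M ^ 2)))
    (hy : μ / 2 * ‖y - x‖ ^ 2 ≤ μ / 8 * c * ε ^ 2) (hz : μ / 2 * ‖y - z‖ ^ 2 < μ / 8 * c * ε ^ 2) :
    ‖x - z‖ ≤ ε ∧ 2 * M * ‖x - z‖ ≤ ε := by
  have htri : ‖x - z‖ ≤ ‖y - x‖ + ‖y - z‖ := by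
    simpa only [norm_sub_rev x y] using norm_sub_le_norm_sub_add_norm_sub x y z
  have hpar : ‖x - z‖ ^ 2 ≤ 2 * ‖y - x‖ ^ 2 + 2 * ‖y - z‖ ^ 2 := by
    nlinarith [norm_nonneg (x - z), sq_nonneg (‖y - x‖ - ‖y - z‖)]
  have hsq : ‖x - z‖ ^ 2 < c * ε ^ 2 := by
    refine lt_of_mul_lt_mul_left ?_ hμ.le
    nlinarith [mul_le_mul_of_nonneg_left hpar hμ.le]
  have hc1 : c ≤ 1 := hc.trans (min_le_left _ _)
  have hcM : 4 * M ^ 2 * c ≤ 1 := by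
    have := hc.trans (min_le_right _ _)
    rwa [le_div_iff₀ (by positivity), mul_comm] at this
  exact ⟨(sq_le_sq₀ (norm_nonneg _) hε).1 (by nlinarith),
    (sq_le_sq₀ (by positivity) hε).1 (by nlinarith)⟩

theorem idca_induced_feasibility_general {n m : ℕ} (μ M ν ε : ℝ)
    (hμ : 0 < μ) (hM : 0 < M) (hν : 0 < ν) (hε : 0 < ε)
    (W : Set (EuclideanSpace ℝ (Fin n))) (hWconv : Convex ℝ W)
    (f0p f0m : EuclideanSpace ℝ (Fin n) → ℝ)
    (fp fm : Fin m → EuclideanSpace ℝ (Fin n) → ℝ)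
    -- Assumption A: strong convexity on ℝⁿ
    (hf0p : StrongConvexOn Set.univ μ f0p)
    (hfp : ∀ i, StrongConvexOn Set.univ μ (fp i))
    (hfm : ∀ i, StrongConvexOn Set.univ μ (fm i))
    -- Assumption D: M-Lipschitz continuity on W
    (hf0pL : LipschitzOnWith (Real.toNNReal M) f0p W)
    (hf0mL : LipschitzOnWith (Real.toNNReal M) f0m W)
    -- Assumption B: uniform Slater condition with margin ν
    (hslater : ∀ w ∈ W, (∀ i, fp i w - fm i w ≤ 0) →
      ∀ s : Fin m → EuclideanSpace ℝ (Fin n),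
        (∀ i, IsSubgradientAt (fm i) w (s i)) →
        ∃ v ∈ W, ∀ i, fp i v - fm i w - ⟪s i, v - w⟫ ≤ -ν)
    -- the current iterate w^{(k)} ∈ W, feasible
    (wk : EuclideanSpace ℝ (Fin n)) (hwkW : wk ∈ W)
    (hwkfeas : ∀ i, fp i wk - fm i wk ≤ 0)
    -- w^{(k)} is not a nearly ε-KKT point
    (hnotKKT : ¬ NearlyKKT W f0p f0m fp fm ε wk)
    -- subgradients of the concave parts at w^{(k)} and the convexified subproblem
    (s0 : EuclideanSpace ℝ (Fin n)) (s : Fin m → EuclideanSpace ℝ (Fin n))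
    (hs0 : IsSubgradientAt f0m wk s0) (hs : ∀ i, IsSubgradientAt (fm i) wk (s i))
    (g0 : EuclideanSpace ℝ (Fin n) → ℝ) (g : Fin m → EuclideanSpace ℝ (Fin n) → ℝ)
    (hg0 : ∀ v, g0 v = f0p v - f0m wk - ⟪s0, v - wk⟫)
    (hg : ∀ i v, g i v = fp i v - fm i wk - ⟪s i, v - wk⟫)
    -- ŵ^{(k+1)} is the optimal solution of the convexified subproblem
    (what : EuclideanSpace ℝ (Fin n)) (hwhatW : what ∈ W)
    (hwhatfeas : ∀ i, g i what ≤ 0)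
    (hwhatopt : ∀ v ∈ W, (∀ i, g i v ≤ 0) → g0 what ≤ g0 v)
    -- precision of the inexact subproblem solution
    (εk : ℝ)
    (hεk : εk = μ / 8 * min 1 (min (1 / (4 * M ^ 2)) (μ * ν / (8 * M ^ 4))) * ε ^ 2)
    -- w^{(k+1)} is an ε_k-optimal solution of the subproblem
    (wk1 : EuclideanSpace ℝ (Fin n)) (hwk1W : wk1 ∈ W)
    (hwk1gap : g0 wk1 - g0 what ≤ εk)
    (hwk1feas : ∀ i, g i wk1 ≤ εk) :
    ∀ i, fp i wk1 - fm i wk1 ≤ 0 := by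
  obtain rfl : g0 = convexifiedAt f0p f0m wk s0 := funext hg0
  obtain rfl : g = fun i => convexifiedAt (fp i) (fm i) wk (s i) := funext fun i => funext (hg i)
  intro i
  by_contra hinfeas
  have hnear : μ / 2 * ‖wk1 - wk‖ ^ 2 < εk := by
    by_contra! hfar
    have := sub_le_convexifiedAt_sub (p := fp i) (hfm i) (hs i) wk1
    exact hinfeas (by linarith [hwk1feas i])
  apply hnotKKT
  have hconv : ∀ {p q : EuclideanSpace ℝ (Fin n) → ℝ} {s}, StrongConvexOn univ μ p →
      StrongConvexOn W μ (convexifiedAt p q wk s) :=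
    fun hp => hp.convexifiedAt.subset (subset_univ W) hWconv
  obtain ⟨vs, hvsW, hvs⟩ := hslater wk hwkW hwkfeas s hs
  obtain ⟨lam, hlam, hcs, hmin⟩ := exists_lagrangeMultipliers ((hconv hf0p).convexOn hμ.le)
    (fun i => (hconv (hfp i)).convexOn hμ.le) hwhatW hwhatfeas hwhatopt
    ⟨vs, hvsW, fun i => (hvs i).trans_lt (neg_neg_of_pos hν)⟩
  have hfar := sq_norm_sub_le_of_isMinOn_lagrangian (hconv hf0p) (fun i => hconv (hfp i)) hlam
    hcs hmin hwhatW hwk1W hwk1gap hwk1feas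
  rw [hεk] at hfar hnear
  obtain ⟨hdist, hgap⟩ := norm_sub_le_and_two_mul_norm_sub_le hμ hM hε.le
    (min_le_min_left _ (min_le_left _ _)) hfar hnear
  refine nearlyKKT_of_isMinOn_lagrangian hWconv (hf0p.convexOn hμ.le)
    (fun i => (hfp i).convexOn hμ.le) hwkW hwkfeas hs0 hs hwhatW hlam hcs hmin hdist
    ((convexifiedAt_self_sub_le hf0pL hf0mL hs0 hwkW hwhatW).trans ?_)
  rwa [Real.coe_toNNReal _ hM.le]

/-- Lemma C.4, induced feasibility of IDCA: if the current iterate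
`w^{(k)}` is feasible but not a nearly ε-KKT point, and `w^{(k+1)}` is an
`ε_k`-optimal solution of the convexified subproblem with
`ε_k = (μ/8)·min{1, 1/(4M²), μν/(8M⁴)}·ε²`, then `w^{(k+1)}` is feasible:
`fᵢ(w^{(k+1)}) ≤ 0` for all `i`. -/
theorem idca_induced_feasibility {n m : ℕ} (μ M ν ε : ℝ)
    (hμ : 0 < μ) (hM : 0 < M) (hν : 0 < ν) (hε : 0 < ε)
    (W : Set (EuclideanSpace ℝ (Fin n))) (hWc : IsClosed W) (hWconv : Convex ℝ W)
    (f0p f0m : EuclideanSpace ℝ (Fin n) → ℝ)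
    (fp fm : Fin m → EuclideanSpace ℝ (Fin n) → ℝ)
    -- Assumption A: strong convexity on ℝⁿ
    (hf0p : StrongConvexOn Set.univ μ f0p) (hf0m : StrongConvexOn Set.univ μ f0m)
    (hfp : ∀ i, StrongConvexOn Set.univ μ (fp i))
    (hfm : ∀ i, StrongConvexOn Set.univ μ (fm i))
    -- Assumption D: M-Lipschitz continuity on W
    (hf0pL : LipschitzOnWith (Real.toNNReal M) f0p W)
    (hf0mL : LipschitzOnWith (Real.toNNReal M) f0m W)
    (hfpL : ∀ i, LipschitzOnWith (Real.toNNReal M) (fp i) W)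
    (hfmL : ∀ i, LipschitzOnWith (Real.toNNReal M) (fm i) W)
    -- Assumption B: uniform Slater condition with margin ν
    (hslater : ∀ w ∈ W, (∀ i, fp i w - fm i w ≤ 0) →
      ∀ s : Fin m → EuclideanSpace ℝ (Fin n),
        (∀ i, IsSubgradientAt (fm i) w (s i)) →
        ∃ v ∈ W, ∀ i, fp i v - fm i w - ⟪s i, v - w⟫ ≤ -ν)
    -- the current iterate w^{(k)} ∈ W, feasible
    (wk : EuclideanSpace ℝ (Fin n)) (hwkW : wk ∈ W)
    (hwkfeas : ∀ i, fp i wk - fm i wk ≤ 0)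
    -- w^{(k)} is not a nearly ε-KKT point
    (hnotKKT : ¬ NearlyKKT W f0p f0m fp fm ε wk)
    -- subgradients of the concave parts at w^{(k)} and the convexified subproblem
    (s0 : EuclideanSpace ℝ (Fin n)) (s : Fin m → EuclideanSpace ℝ (Fin n))
    (hs0 : IsSubgradientAt f0m wk s0) (hs : ∀ i, IsSubgradientAt (fm i) wk (s i))
    (g0 : EuclideanSpace ℝ (Fin n) → ℝ) (g : Fin m → EuclideanSpace ℝ (Fin n) → ℝ)
    (hg0 : ∀ v, g0 v = f0p v - f0m wk - ⟪s0, v - wk⟫)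
    (hg : ∀ i v, g i v = fp i v - fm i wk - ⟪s i, v - wk⟫)
    -- ŵ^{(k+1)} is the optimal solution of the convexified subproblem
    (what : EuclideanSpace ℝ (Fin n)) (hwhatW : what ∈ W)
    (hwhatfeas : ∀ i, g i what ≤ 0)
    (hwhatopt : ∀ v ∈ W, (∀ i, g i v ≤ 0) → g0 what ≤ g0 v)
    -- precision of the inexact subproblem solution
    (εk : ℝ)
    (hεk : εk = μ / 8 * min 1 (min (1 / (4 * M ^ 2)) (μ * ν / (8 * M ^ 4))) * ε ^ 2)
    -- w^{(k+1)} is an ε_k-optimal solution of the subproblem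
    (wk1 : EuclideanSpace ℝ (Fin n)) (hwk1W : wk1 ∈ W)
    (hwk1gap : g0 wk1 - g0 what ≤ εk)
    (hwk1feas : ∀ i, g i wk1 ≤ εk) :
    ∀ i, fp i wk1 - fm i wk1 ≤ 0 :=
  idca_induced_feasibility_general μ M ν ε hμ hM hν hε W hWconv f0p f0m fp fm hf0p hfp hfm hf0pL
    hf0mL hslater wk hwkW hwkfeas hnotKKT s0 s hs0 hs g0 g hg0 hg what hwhatW hwhatfeas hwhatopt εk
    hεk wk1 hwk1W hwk1gap hwk1feas
end

section
/- In the IDCA descent step: if w^{(k)} is feasible (fᵢ(w^{(k)}) ≤ 0, i ∈ [m]), ŵ^{(k+1)} solves the convexified subproblem with multipliers λᵢ^{(k)} ≥ 0 satisfying complementary slackness, w^{(k+1)} is ε_k-optimal for the subproblem, and f₀⁻ is μ-strongly convex, then f₀(w^{(k)}) ≥ f₀(w^{(k+1)}) + (μ/2)(1 + Σᵢ λᵢ^{(k)})‖ŵ^{(k+1)} − w^{(k)}‖² + (μ/2)‖w^{(k)} − w^{(k+1)}‖² − ε_k. -/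
open scoped RealInnerProductSpace
open Finset

private lemma idca_limit_helper {C D E : ℝ}
    (h : ∀ b : ℝ, 0 < b → b < 1 → C + (1 - b) * D ≤ E) : C + D ≤ E := by
  have ht : Filter.Tendsto (fun b : ℝ => C + (1 - b) * D)
      (nhdsWithin 0 (Set.Ioi 0)) (nhds (C + D)) := by
    have h2 : Continuous fun b : ℝ => C + (1 - b) * D := by continuity
    have := (h2.tendsto 0).mono_left (nhdsWithin_le_nhds (s := Set.Ioi (0:ℝ)))
    simpa using this
  refine le_of_tendsto ht ?_
  filter_upwards [self_mem_nhdsWithin,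
    nhdsWithin_le_nhds (Iio_mem_nhds (by norm_num : (0:ℝ) < 1))] with b hb hb1
  exact h b hb hb1

private lemma idca_strong_subgrad {N : ℕ} {μ : ℝ} {f : EuclideanSpace ℝ (Fin N) → ℝ}
    (hf : StrongConvexOn Set.univ μ f) (w s v : EuclideanSpace ℝ (Fin N))
    (hs : ∀ u, f w + ⟪s, u - w⟫ ≤ f u) :
    (f w + ⟪s, v - w⟫) + μ / 2 * ‖w - v‖ ^ 2 ≤ f v := by
  apply idca_limit_helper
  intro b hb hb1
  set z := (1 - b) • w + b • v with hz
  have hcv := hf.2 (Set.mem_univ w) (Set.mem_univ v)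
    (by linarith : (0:ℝ) ≤ 1 - b) (le_of_lt hb) (by ring)
  have hzw : z - w = b • (v - w) := by
    rw [hz]; module
  have hinner : ⟪s, z - w⟫ = b * ⟪s, v - w⟫ := by
    rw [hzw, real_inner_smul_right]
  have hsz := hs z
  rw [hinner] at hsz
  simp only [smul_eq_mul] at hcv
  have key : f w + b * ⟪s, v - w⟫ ≤ (1 - b) * f w + b * f v
      - (1 - b) * b * (μ / 2 * ‖w - v‖ ^ 2) := le_trans hsz hcv
  have hb' : 0 < b := hb
  nlinarith [key]

private lemma idca_strong_min {N : ℕ} {K : ℝ} {W : Set (EuclideanSpace ℝ (Fin N))}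
    (hW : Convex ℝ W) {f : EuclideanSpace ℝ (Fin N) → ℝ}
    (hf : ∀ x ∈ W, ∀ y ∈ W, ∀ a b : ℝ, 0 ≤ a → 0 ≤ b → a + b = 1 →
      f (a • x + b • y) ≤ a * f x + b * f y - a * b * (K / 2 * ‖x - y‖ ^ 2))
    {xs : EuclideanSpace ℝ (Fin N)} (hxs : xs ∈ W) (hmin : ∀ y ∈ W, f xs ≤ f y)
    (y : EuclideanSpace ℝ (Fin N)) (hy : y ∈ W) :
    f xs + K / 2 * ‖xs - y‖ ^ 2 ≤ f y := by
  apply idca_limit_helper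
  intro b hb hb1
  have hmem : (1 - b) • xs + b • y ∈ W :=
    hW hxs hy (by linarith) (le_of_lt hb) (by ring)
  have h1 := hmin _ hmem
  have h2 := hf xs hxs y hy (1 - b) b (by linarith) (le_of_lt hb) (by ring)
  nlinarith [le_trans h1 h2]

/-- IDCA descent step: with `w^{(k)}` feasible, `ŵ^{(k+1)}` solving
the convexified subproblem with multipliers `λᵢ^{(k)} ≥ 0` satisfying complementary
slackness (stationarity being expressed as minimization of the Lagrangian over `W`),
`w^{(k+1)}` an `ε_k`-optimal subproblem solution, and `f₀⁻` μ-strongly convex, one has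
`f₀(w^{(k)}) ≥ f₀(w^{(k+1)}) + (μ/2)(1 + Σᵢ λᵢ^{(k)})‖ŵ^{(k+1)} − w^{(k)}‖²
  + (μ/2)‖w^{(k)} − w^{(k+1)}‖² − ε_k`. -/
theorem idca_descent_step {n m : ℕ} (μ : ℝ) (hμ : 0 < μ)
    (W : Set (EuclideanSpace ℝ (Fin n))) (hWc : IsClosed W) (hWconv : Convex ℝ W)
    (f0p f0m : EuclideanSpace ℝ (Fin n) → ℝ)
    (fp fm : Fin m → EuclideanSpace ℝ (Fin n) → ℝ)
    (hf0p : StrongConvexOn Set.univ μ f0p) (hf0m : StrongConvexOn Set.univ μ f0m)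
    (hfp : ∀ i, StrongConvexOn Set.univ μ (fp i))
    (hfm : ∀ i, StrongConvexOn Set.univ μ (fm i))
    -- the current iterate w^{(k)} ∈ W, feasible
    (wk : EuclideanSpace ℝ (Fin n)) (hwkW : wk ∈ W)
    (hwkfeas : ∀ i, fp i wk - fm i wk ≤ 0)
    -- subgradients of the concave parts at w^{(k)} and the convexified functions
    (s0 : EuclideanSpace ℝ (Fin n)) (s : Fin m → EuclideanSpace ℝ (Fin n))
    (hs0 : ∀ v, f0m wk + ⟪s0, v - wk⟫ ≤ f0m v)
    (hs : ∀ i, ∀ v, fm i wk + ⟪s i, v - wk⟫ ≤ fm i v)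
    (g0 : EuclideanSpace ℝ (Fin n) → ℝ) (g : Fin m → EuclideanSpace ℝ (Fin n) → ℝ)
    (hg0 : ∀ v, g0 v = f0p v - f0m wk - ⟪s0, v - wk⟫)
    (hg : ∀ i v, g i v = fp i v - fm i wk - ⟪s i, v - wk⟫)
    -- ŵ^{(k+1)} solves the convexified subproblem with multipliers λ^{(k)}
    (what : EuclideanSpace ℝ (Fin n)) (hwhatW : what ∈ W)
    (hwhatfeas : ∀ i, g i what ≤ 0)
    (lam : Fin m → ℝ) (hlam : ∀ i, 0 ≤ lam i)
    (hcs : ∀ i, lam i * g i what = 0)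
    (hLagmin : ∀ v ∈ W,
      g0 what + ∑ i, lam i * g i what ≤ g0 v + ∑ i, lam i * g i v)
    (hwhatopt : ∀ v ∈ W, (∀ i, g i v ≤ 0) → g0 what ≤ g0 v)
    -- w^{(k+1)} is an ε_k-optimal solution of the subproblem
    (εk : ℝ) (hεk : 0 ≤ εk)
    (wk1 : EuclideanSpace ℝ (Fin n)) (hwk1W : wk1 ∈ W)
    (hwk1gap : g0 wk1 - g0 what ≤ εk)
    (hwk1feas : ∀ i, g i wk1 ≤ εk) :
    f0p wk - f0m wk ≥
      (f0p wk1 - f0m wk1)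
      + μ / 2 * (1 + ∑ i, lam i) * ‖what - wk‖ ^ 2
      + μ / 2 * ‖wk - wk1‖ ^ 2 - εk := by
  classical
  -- the Lagrangian
  set L : EuclideanSpace ℝ (Fin n) → ℝ := fun v => g0 v + ∑ i, lam i * g i v with hL
  have hSum0 : (0:ℝ) ≤ ∑ i, lam i := Finset.sum_nonneg fun i _ => hlam i
  -- strong convexity inequality for g0
  have hg0conv : ∀ x y : EuclideanSpace ℝ (Fin n), ∀ a b : ℝ, 0 ≤ a → 0 ≤ b → a + b = 1 →
      g0 (a • x + b • y) ≤ a * g0 x + b * g0 y - a * b * (μ / 2 * ‖x - y‖ ^ 2) := by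
    intro x y a b ha hb hab
    have hcv := hf0p.2 (Set.mem_univ x) (Set.mem_univ y) ha hb hab
    simp only [smul_eq_mul] at hcv
    have hzw : a • (x - wk) + b • (y - wk) = (a • x + b • y) - wk := by
      have h1 : a • (x - wk) + b • (y - wk) = a • x + b • y - (a + b) • wk := by module
      rw [h1, hab, one_smul]
    have hinner : ⟪s0, (a • x + b • y) - wk⟫ = a * ⟪s0, x - wk⟫ + b * ⟪s0, y - wk⟫ := by
      rw [← hzw, inner_add_right, real_inner_smul_right, real_inner_smul_right]
    rw [hg0, hg0, hg0, hinner]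
    have hc : a * f0m wk + b * f0m wk = f0m wk := by rw [← add_mul, hab, one_mul]
    linarith [hcv, hc]
  -- strong convexity inequality for each g i
  have hgconv : ∀ i, ∀ x y : EuclideanSpace ℝ (Fin n), ∀ a b : ℝ, 0 ≤ a → 0 ≤ b → a + b = 1 →
      g i (a • x + b • y) ≤ a * g i x + b * g i y - a * b * (μ / 2 * ‖x - y‖ ^ 2) := by
    intro i x y a b ha hb hab
    have hcv := (hfp i).2 (Set.mem_univ x) (Set.mem_univ y) ha hb hab
    simp only [smul_eq_mul] at hcv
    have hzw : a • (x - wk) + b • (y - wk) = (a • x + b • y) - wk := by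
      have h1 : a • (x - wk) + b • (y - wk) = a • x + b • y - (a + b) • wk := by module
      rw [h1, hab, one_smul]
    have hinner : ⟪s i, (a • x + b • y) - wk⟫ = a * ⟪s i, x - wk⟫ + b * ⟪s i, y - wk⟫ := by
      rw [← hzw, inner_add_right, real_inner_smul_right, real_inner_smul_right]
    rw [hg, hg, hg, hinner]
    have hc : a * fm i wk + b * fm i wk = fm i wk := by rw [← add_mul, hab, one_mul]
    linarith [hcv, hc]
  -- strong convexity inequality for the Lagrangian with constant μ(1 + Σλ)
  have hLconv : ∀ x ∈ W, ∀ y ∈ W, ∀ a b : ℝ, 0 ≤ a → 0 ≤ b → a + b = 1 →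
      L (a • x + b • y) ≤ a * L x + b * L y
        - a * b * ((μ * (1 + ∑ i, lam i)) / 2 * ‖x - y‖ ^ 2) := by
    intro x _ y _ a b ha hb hab
    have hsum : ∑ i, lam i * g i (a • x + b • y) ≤
        ∑ i, (a * (lam i * g i x) + b * (lam i * g i y)
          - lam i * (a * b * (μ / 2 * ‖x - y‖ ^ 2))) := by
      refine Finset.sum_le_sum fun i _ => ?_
      have := mul_le_mul_of_nonneg_left (hgconv i x y a b ha hb hab) (hlam i)
      nlinarith [this]
    rw [Finset.sum_sub_distrib, Finset.sum_add_distrib, ← Finset.mul_sum,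
      ← Finset.mul_sum, ← Finset.sum_mul] at hsum
    have h0 := hg0conv x y a b ha hb hab
    simp only [hL]
    nlinarith [hsum, h0]
  -- ŵ minimizes L over W, hence the quadratic growth bound at wk
  have hmin : ∀ y ∈ W, L what ≤ L y := fun y hy => hLagmin y hy
  have hgrow := idca_strong_min hWconv hLconv hwhatW hmin wk hwkW
  -- L what = g0 what by complementary slackness
  have hLwhat : L what = g0 what := by
    simp only [hL]
    rw [Finset.sum_congr rfl fun i _ => hcs i]
    simp
  -- L wk ≤ f0 wk
  have hginner0 : ⟪s0, wk - wk⟫ = 0 := by rw [sub_self, inner_zero_right]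
  have hg0wk : g0 wk = f0p wk - f0m wk := by rw [hg0, hginner0]; ring
  have hgiwk : ∀ i, g i wk = fp i wk - fm i wk := by
    intro i
    rw [hg, sub_self, inner_zero_right]; ring
  have hLwk : L wk ≤ f0p wk - f0m wk := by
    simp only [hL, hg0wk]
    have : ∑ i, lam i * g i wk ≤ 0 := by
      refine Finset.sum_nonpos fun i _ => ?_
      rw [hgiwk i]
      exact mul_nonpos_of_nonneg_of_nonpos (hlam i) (hwkfeas i)
    linarith
  -- strong subgradient bound on g0 wk1
  have hsub := idca_strong_subgrad hf0m wk s0 wk1 hs0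
  have hg0wk1 : f0p wk1 - f0m wk1 + μ / 2 * ‖wk - wk1‖ ^ 2 ≤ g0 wk1 := by
    rw [hg0]
    linarith [hsub]
  -- chain everything together
  have hgrow2 : L what + μ / 2 * (1 + ∑ i, lam i) * ‖what - wk‖ ^ 2 ≤ L wk := by
    have : (μ * (1 + ∑ i, lam i)) / 2 * ‖what - wk‖ ^ 2
        = μ / 2 * (1 + ∑ i, lam i) * ‖what - wk‖ ^ 2 := by ring
    linarith [hgrow, this.ge, this.le]
  have h1 : g0 what + μ / 2 * (1 + ∑ i, lam i) * ‖what - wk‖ ^ 2 ≤ f0p wk - f0m wk := by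
    calc g0 what + μ / 2 * (1 + ∑ i, lam i) * ‖what - wk‖ ^ 2
        = L what + μ / 2 * (1 + ∑ i, lam i) * ‖what - wk‖ ^ 2 := by rw [hLwhat]
      _ ≤ L wk := hgrow2
      _ ≤ f0p wk - f0m wk := hLwk
  linarith [h1, hg0wk1, hwk1gap]
end
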